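/- arXiv:1601.03229 — 8 statements merged into one kernel-verified Lean document; each statement's English description precedes it below -/
import Mathlib

section
/- For any real λ > 0 and any real x, the ratio ln( Pr[x + η > θ] / Pr[x - 1 + η > θ] ), where η follows the Laplace distribution with scale λ (density (1/(2λ))·exp(-|y|/λ)), is at most 1/λ. -/
open Real MeasureTheory

/-- Pr[Lap(l) > t] for the Laplace distribution with scale l,
density (1/(2l))·exp(-|y|/l). -/
noncomputable def lapTail (l t : ℝ) : ℝ :=
  ∫ y in Set.Ioi t, (1 / (2 * l)) * Real.exp (-|y| / l)

/-- Pr[Lap(l) ≤ t]. -/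
noncomputable def lapCDF (l t : ℝ) : ℝ :=
  ∫ y in Set.Iic t, (1 / (2 * l)) * Real.exp (-|y| / l)

open Set in
private lemma lapInt (l : ℝ) (hl : 0 < l) (t c : ℝ) :
    IntegrableOn (fun y : ℝ => (1 / (2*l)) * Real.exp (-|y + c| / l)) (Ioi t) := by
  apply Integrable.const_mul
  apply integrable_of_isBigO_exp_neg (b := 1/l) (by positivity) (by fun_prop)
  apply Asymptotics.IsBigO.of_bound (Real.exp (|c| / l))
  filter_upwards [Filter.eventually_ge_atTop 0] with y hy
  have h1 : y - |c| ≤ |y + c| := by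
    have := abs_sub_abs_le_abs_sub y (y + c)
    simp only [sub_add_cancel_left, abs_neg] at this
    have : |y| - |c| ≤ |c| + (|y| - |c|) - |c| + 0 := by linarith [abs_nonneg c]
    linarith [abs_sub_abs_le_abs_sub y (y + c), le_abs_self y, abs_nonneg c]
  have h2 : -|y + c| / l ≤ |c| / l + (-(1/l) * y) := by
    rw [div_le_iff₀ hl] at *
    have : -|y + c| ≤ |c| - y := by linarith
    calc -|y + c| ≤ |c| - y := this
      _ = (|c| / l + -(1/l) * y) * l := by field_simp; ring
  calc |Real.exp (-|y + c| / l)| = Real.exp (-|y + c| / l) := abs_of_nonneg (Real.exp_nonneg _)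
    _ ≤ Real.exp (|c| / l + (-(1/l) * y)) := Real.exp_le_exp.2 h2
    _ = Real.exp (|c| / l) * Real.exp (-(1/l) * y) := Real.exp_add _ _
    _ = Real.exp (|c| / l) * |Real.exp (-(1/l) * y)| := by
        rw [abs_of_nonneg (Real.exp_nonneg _)]

open Set in
private lemma lapTail_pos (l : ℝ) (hl : 0 < l) (t : ℝ) : 0 < lapTail l t := by
  rw [lapTail, setIntegral_pos_iff_support_of_nonneg_ae]
  · have : Function.support (fun y : ℝ => (1 / (2 * l)) * Real.exp (-|y| / l)) = univ := by
      ext y; simp [Function.mem_support]; positivity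
    rw [this, univ_inter]
    simp [Real.volume_Ioi]
  · filter_upwards with y using by positivity
  · have := lapInt l hl t 0
    simpa using this

open Set in
private lemma lapTail_shift (l : ℝ) (hl : 0 < l) (t : ℝ) :
    Real.exp (-(1/l)) * lapTail l t ≤ lapTail l (t + 1) := by
  have hshift : lapTail l (t + 1)
      = ∫ y in Ioi t, (1 / (2 * l)) * Real.exp (-|y + 1| / l) := by
    rw [lapTail, ← integral_indicator measurableSet_Ioi,
      ← integral_indicator measurableSet_Ioi,
      ← MeasureTheory.integral_add_right_eq_self
        (fun y => (Ioi (t+1)).indicator (fun y => (1 / (2 * l)) * Real.exp (-|y| / l)) y) 1]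
    congr 1
    ext y
    by_cases h : t < y <;>
      simp [Set.indicator, h, lt_tsub_iff_right]
  have g0 : IntegrableOn (fun y : ℝ => (1 / (2*l)) * Real.exp (-|y| / l)) (Ioi t) := by
    simpa using lapInt l hl t 0
  rw [hshift, lapTail, ← integral_const_mul]
  apply setIntegral_mono (g0.const_mul _) (lapInt l hl t 1)
  · intro y
    simp only []
    rw [mul_left_comm]
    apply mul_le_mul_of_nonneg_left _ (by positivity)
    rw [← Real.exp_add, Real.exp_le_exp]
    have h : |y + 1| ≤ |y| + 1 := by simpa using abs_add_le y 1
    calc -(1/l) + -|y| / l = (-(1 + |y|)) / l := by ring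
      _ ≤ -|y + 1| / l := by gcongr; linarith

/-- ρ(x) = ln(Pr[x+η>θ]/Pr[x-1+η>θ]) ≤ 1/λ. -/
theorem stmt0 (l θ x : ℝ) (hl : 0 < l) :
    Real.log (lapTail l (θ - x) / lapTail l (θ - (x - 1))) ≤ 1 / l := by
  have hT := lapTail_pos l hl (θ - x)
  have hT1 := lapTail_pos l hl ((θ - x) + 1)
  have hs := lapTail_shift l hl (θ - x)
  rw [show θ - (x - 1) = (θ - x) + 1 from by ring]
  rw [Real.log_le_iff_le_exp (by positivity), div_le_iff₀ hT1]
  calc lapTail l (θ - x)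
      = Real.exp (1/l) * (Real.exp (-(1/l)) * lapTail l (θ - x)) := by
        rw [← mul_assoc, ← Real.exp_add]; simp
    _ ≤ Real.exp (1/l) * lapTail l ((θ - x) + 1) :=
        mul_le_mul_of_nonneg_left hs (Real.exp_nonneg _)
end

section
/- For λ > 0 and α ∈ (0, 1/2], the function f(α) = ln( (1 - α·e^{-1/λ}) / (1 - α) ) - 2α/λ satisfies f(α) ≤ 0. -/
open Real

/-- f(α) = ln((1-α e^{-1/λ})/(1-α)) - 2α/λ ≤ 0 for α ∈ (0, 1/2]. -/
theorem stmt3 (l α : ℝ) (hl : 0 < l) (hα : α ∈ Set.Ioc (0 : ℝ) (1 / 2)) :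
    Real.log ((1 - α * Real.exp (-1 / l)) / (1 - α)) - 2 * α / l ≤ 0 := by
  obtain ⟨hα0, hα2⟩ := hα
  set e := Real.exp (-1 / l) with he
  have he0 : 0 < e := Real.exp_pos _
  have he1 : e ≤ 1 := by
    rw [he, Real.exp_le_one_iff]
    have : (0:ℝ) < 1 / l := by positivity
    have h : -1 / l = -(1 / l) := by ring
    linarith [h]
  have h1α : (0:ℝ) < 1 - α := by linarith
  have hnum : (0:ℝ) < 1 - α * e := by nlinarith
  have hexp : 1 - 1 / l ≤ e := by
    have := Real.add_one_le_exp (-1 / l)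
    rw [he]
    have : -1 / l = -(1 / l) := by ring
    linarith [Real.add_one_le_exp (-1 / l), this ▸ (rfl : (-1/l:ℝ) = -1/l)]
  have hlog : Real.log ((1 - α * e) / (1 - α)) ≤ (1 - α * e) / (1 - α) - 1 :=
    Real.log_le_sub_one_of_pos (by positivity)
  have key : (1 - α * e) / (1 - α) - 1 ≤ 2 * α / l := by
    rw [div_sub_one (ne_of_gt h1α), div_le_div_iff₀ h1α hl]
    have hinv : l * (1 / l) = 1 := by field_simp
    have h2 : l - 1 ≤ l * e := by nlinarith [mul_le_mul_of_nonneg_left hexp hl.le]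
    nlinarith
  linarith
end

section
/- For λ > 0, the function f(α) = ln( (1 - α·e^{-1/λ}) / (1 - α) ) - 2α/λ is strictly convex on (0, 1/2]; specifically its second derivative equals (e^{1/λ} - 1)·(e^{1/λ} + 1 - 2α) / ((1-α)²·(e^{1/λ} - α)²), which is strictly positive for α ∈ (0, 1/2]. -/
/-!
With `E = exp (1 / l) > 1` one has `1 - α exp (-1 / l) = (E - α) / E`, so on `α < 1`
`f α = log (E - α) - log (1 - α) - (2 α + 1) / l`. Hence `f'' α = 1 / (1 - α)² - 1 / (E - α)²`,
which is positive because `0 < 1 - α < E - α`.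
-/

open Real Set Filter Topology

noncomputable def logSubLogAffine (a b m k x : ℝ) : ℝ :=
  log (a - x) - log (b - x) + (m * x + k)

lemma hasDerivAt_log_const_sub {a x : ℝ} (hx : x ≠ a) :
    HasDerivAt (fun y => log (a - y)) (-(a - x)⁻¹) x := by
  simpa [neg_div, div_eq_inv_mul] using
    ((hasDerivAt_id x).const_sub a).log (sub_ne_zero.2 hx.symm)

lemma hasDerivAt_neg_inv_const_sub {a x : ℝ} (hx : x ≠ a) :
    HasDerivAt (fun y => -(a - y)⁻¹) (-((a - x) ^ 2)⁻¹) x := by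
  simpa [div_eq_inv_mul] using
    (((hasDerivAt_id x).const_sub a).fun_inv (sub_ne_zero.2 hx.symm)).fun_neg

section logSubLogAffine

variable {a b m k x : ℝ}

lemma hasDerivAt_logSubLogAffine (ha : x ≠ a) (hb : x ≠ b) :
    HasDerivAt (logSubLogAffine a b m k) (-(a - x)⁻¹ - -(b - x)⁻¹ + m) x :=
  ((hasDerivAt_log_const_sub ha).sub (hasDerivAt_log_const_sub hb)).add
    (((hasDerivAt_id x).const_mul m).add_const k |>.congr_deriv (mul_one m))

lemma deriv_deriv_logSubLogAffine (ha : x ≠ a) (hb : x ≠ b) :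
    deriv (deriv (logSubLogAffine a b m k)) x = ((b - x) ^ 2)⁻¹ - ((a - x) ^ 2)⁻¹ := by
  have hderiv : deriv (logSubLogAffine a b m k) =ᶠ[𝓝 x] fun y => -(a - y)⁻¹ - -(b - y)⁻¹ + m := by
    filter_upwards [isOpen_ne.mem_nhds ha, isOpen_ne.mem_nhds hb] with y hya hyb
    exact (hasDerivAt_logSubLogAffine hya hyb).deriv
  rw [hderiv.deriv_eq]
  exact (((hasDerivAt_neg_inv_const_sub ha).sub (hasDerivAt_neg_inv_const_sub hb)).add_const m
    |>.deriv).trans (by ring)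

end logSubLogAffine

lemma log_one_sub_mul_exp_div_one_sub_sub {l α : ℝ} (h1 : α ≠ 1) (hE : α ≠ exp (1 / l)) :
    log ((1 - α * exp (-1 / l)) / (1 - α)) - 2 * α / l =
      logSubLogAffine (exp (1 / l)) 1 (-(2 / l)) (-(1 / l)) α := by
  have hfactor : 1 - α * exp (-1 / l) = (exp (1 / l) - α) * exp (-1 / l) := by
    rw [sub_mul, ← exp_add, neg_div, add_neg_cancel, exp_zero]
  have hEα : exp (1 / l) - α ≠ 0 := sub_ne_zero.2 hE.symm
  rw [hfactor, log_div (mul_ne_zero hEα (exp_pos _).ne') (sub_ne_zero.2 h1.symm),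
    log_mul hEα (exp_pos _).ne', log_exp, logSubLogAffine]
  ring

/-- f is strictly convex on (0, 1/2], with explicit positive second
derivative. -/
theorem stmt4 (l : ℝ) (hl : 0 < l)
    (f : ℝ → ℝ)
    (hf : f = fun α => Real.log ((1 - α * Real.exp (-1 / l)) / (1 - α)) - 2 * α / l) :
    StrictConvexOn ℝ (Set.Ioc (0 : ℝ) (1 / 2)) f ∧
      ∀ α ∈ Set.Ioc (0 : ℝ) (1 / 2),
        deriv (deriv f) α =
          (Real.exp (1 / l) - 1) * (Real.exp (1 / l) + 1 - 2 * α) /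
            ((1 - α) ^ 2 * (Real.exp (1 / l) - α) ^ 2) ∧
        0 < (Real.exp (1 / l) - 1) * (Real.exp (1 / l) + 1 - 2 * α) /
            ((1 - α) ^ 2 * (Real.exp (1 / l) - α) ^ 2) := by
  set E := exp (1 / l)
  have hE : 1 < E := one_lt_exp_iff.2 (by positivity)
  have hloc : ∀ α < 1, f =ᶠ[𝓝 α] logSubLogAffine E 1 (-(2 / l)) (-(1 / l)) := fun α hα => by
    filter_upwards [Iio_mem_nhds hα] with y (hy : y < 1)
    rw [hf]
    exact log_one_sub_mul_exp_div_one_sub_sub hy.ne (by linarith)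
  have hf'' : ∀ α ∈ Ioc (0 : ℝ) (1 / 2),
      deriv (deriv f) α = (E - 1) * (E + 1 - 2 * α) / ((1 - α) ^ 2 * (E - α) ^ 2) ∧
        0 < (E - 1) * (E + 1 - 2 * α) / ((1 - α) ^ 2 * (E - α) ^ 2) := by
    rintro α ⟨-, hα⟩
    have h1 : 0 < 1 - α := by linarith
    have hEα : 0 < E - α := by linarith
    refine ⟨?_, div_pos (mul_pos (by linarith) (by linarith)) (by positivity)⟩
    rw [(hloc α (by linarith)).deriv.deriv_eq, deriv_deriv_logSubLogAffine (by linarith) (by linarith)]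
    field_simp
    ring
  refine ⟨strictConvexOn_of_deriv2_pos (convex_Ioc 0 (1 / 2)) ?_ ?_, hf''⟩
  · rintro α ⟨-, hα⟩
    have hα1 : α < 1 := by linarith
    exact ((hasDerivAt_logSubLogAffine (by linarith) hα1.ne).continuousAt.congr
      (hloc α hα1).symm).continuousWithinAt
  · rw [interior_Ioc]
    intro α hα
    obtain ⟨hderiv2, hpos⟩ := hf'' α (Ioo_subset_Ioc_self hα)
    show 0 < deriv (deriv f) α
    rwa [hderiv2]
end

section
/- Let λ, δ, θ be reals with λ > 0 and δ > 0, and let b₁ ≥ b₂ ≥ ... ≥ bₘ be reals satisfying bᵢ ≥ b_{i+1} + δ for all i ∈ [1, m-1] and bₘ ≥ θ + 1 - δ. Define ρ⊤(x) = 1/λ if x < θ + 1 and ρ⊤(x) = (1/λ)·exp((θ+1-x)/λ) otherwise. Then Σ_{i=1}^{m} ρ⊤(bᵢ) ≤ (1/λ)·(2e^{δ/λ} - 1)/(e^{δ/λ} - 1). -/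
open Real

/-- The upper bound ρ⊤. -/
noncomputable def rhoTop (l θ x : ℝ) : ℝ :=
  if x < θ + 1 then 1 / l else (1 / l) * Real.exp ((θ + 1 - x) / l)

/-- sum of ρ⊤ along a path with gaps ≥ δ is bounded by
(1/λ)·(2e^{δ/λ}-1)/(e^{δ/λ}-1). -/
theorem stmt6 (l δ θ : ℝ) (hl : 0 < l) (hδ : 0 < δ)
    (m : ℕ) (hm : 1 ≤ m) (b : ℕ → ℝ)
    (hgap : ∀ i, 1 ≤ i → i ≤ m - 1 → b i ≥ b (i + 1) + δ)
    (hlast : b m ≥ θ + 1 - δ) :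
    ∑ i ∈ Finset.Icc 1 m, rhoTop l θ (b i) ≤
      (1 / l) * (2 * Real.exp (δ / l) - 1) / (Real.exp (δ / l) - 1) := by
  have hdl : 0 < δ / l := div_pos hδ hl
  set E := Real.exp (δ / l) with hE
  set r := Real.exp (-(δ / l)) with hr
  have hE1 : 1 < E := Real.one_lt_exp_iff.mpr hdl
  have hr0 : 0 < r := Real.exp_pos _
  have hr1 : r < 1 := Real.exp_lt_one_iff.mpr (by linarith)
  have hrE : r = E⁻¹ := by rw [hr, hE, Real.exp_neg]
  -- basic bound: rhoTop ≤ 1/l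
  have hbase : ∀ x : ℝ, rhoTop l θ x ≤ 1 / l := by
    intro x
    unfold rhoTop
    split
    · exact le_refl _
    · rename_i h
      push_neg at h
      have hxe : (θ + 1 - x) / l ≤ 0 :=
        div_nonpos_of_nonpos_of_nonneg (by linarith) hl.le
      have := Real.exp_le_one_iff.mpr hxe
      have h1l : 0 < 1 / l := by positivity
      nlinarith
  -- power bound
  have hpow : ∀ (n : ℕ) (x : ℝ), θ + 1 + (n : ℝ) * δ ≤ x →
      rhoTop l θ x ≤ (1 / l) * r ^ n := by
    intro n x hx
    have hnd : (0:ℝ) ≤ (n:ℝ) * δ := by positivity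
    have hge : ¬ x < θ + 1 := by push_neg; linarith
    unfold rhoTop
    rw [if_neg hge]
    have h1l : 0 ≤ 1 / l := by positivity
    have hle : (θ + 1 - x) / l ≤ (n : ℝ) * (-(δ / l)) := by
      rw [div_le_iff₀ hl]
      have : (n:ℝ) * (-(δ / l)) * l = -((n:ℝ) * δ) := by
        field_simp
      rw [this]; linarith
    calc (1 / l) * Real.exp ((θ + 1 - x) / l)
        ≤ (1 / l) * Real.exp ((n : ℝ) * (-(δ / l))) :=
          mul_le_mul_of_nonneg_left (Real.exp_le_exp.mpr hle) h1l
      _ = (1 / l) * r ^ n := by rw [Real.exp_nat_mul]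
  -- chain bound on b
  have key : ∀ k i, 1 ≤ i → i + k = m → b m + (k : ℝ) * δ ≤ b i := by
    intro k
    induction k with
    | zero =>
      intro i hi h
      simp only [Nat.add_zero] at h
      subst h
      simp
    | succ k ih =>
      intro i hi h
      have h1 : (i + 1) + k = m := by omega
      have h2 := ih (i + 1) (by omega) h1
      have h3 := hgap i hi (by omega)
      push_cast
      push_cast at h2
      linarith
  obtain ⟨n, rfl⟩ : ∃ n, m = n + 1 := ⟨m - 1, by omega⟩
  rw [Finset.sum_Icc_succ_top (by omega : 1 ≤ n + 1)]
  have hsum1 : ∑ i ∈ Finset.Icc 1 n, rhoTop l θ (b i) ≤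
      ∑ i ∈ Finset.Icc 1 n, (1 / l) * r ^ (n - i) := by
    apply Finset.sum_le_sum
    intro i hi
    simp only [Finset.mem_Icc] at hi
    apply hpow
    have hk := key (n + 1 - i) i hi.1 (by omega)
    have hc : ((n + 1 - i : ℕ) : ℝ) = ((n - i : ℕ) : ℝ) + 1 := by
      have : n + 1 - i = (n - i) + 1 := by omega
      rw [this]; push_cast; ring
    rw [hc] at hk
    nlinarith
  have hsum2 : ∑ i ∈ Finset.Icc 1 n, (1 / l) * r ^ (n - i) ≤ (1 / l) * (1 / (1 - r)) := by
    rw [← Finset.mul_sum]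
    apply mul_le_mul_of_nonneg_left _ (by positivity)
    have hre : ∑ i ∈ Finset.Icc 1 n, r ^ (n - i) = ∑ j ∈ Finset.range n, r ^ j := by
      rw [← Finset.Ico_add_one_right_eq_Icc, Finset.sum_Ico_eq_sum_range]
      have h1 : n + 1 - 1 = n := by omega
      rw [h1]
      rw [← Finset.sum_range_reflect (fun j => r ^ (n - (1 + j))) n]
      apply Finset.sum_congr rfl
      intro j hj
      simp only [Finset.mem_range] at hj
      congr 1
      omega
    rw [hre]
    have hgeom := geom_sum_eq (ne_of_lt hr1) n
    rw [hgeom]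
    have h1r : 0 < 1 - r := by linarith
    have heq : (r ^ n - 1) / (r - 1) = (1 - r ^ n) / (1 - r) := by
      rw [div_eq_div_iff (sub_ne_zero.mpr hr1.ne) h1r.ne']; ring
    rw [heq]
    have hrn : 0 ≤ r ^ n := by positivity
    exact div_le_div_of_nonneg_right (by linarith) h1r.le
  have hlastb := hbase (b (n + 1))
  have hfin : (1 / l) * (1 / (1 - r)) + 1 / l =
      (1 / l) * (2 * E - 1) / (E - 1) := by
    rw [hrE]
    have hE0 : (0:ℝ) < E := by linarith
    have hEne : E - 1 ≠ 0 := by linarith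
    have hE0' : E ≠ 0 := ne_of_gt hE0
    have hl' : l ≠ 0 := ne_of_gt hl
    have h1 : 1 - E⁻¹ = (E - 1) / E := by field_simp
    rw [h1, one_div_div]
    field_simp
    ring
  linarith
end

section
/- For any real λ > 0, any real x, and any t ≥ 0: Pr[Lap(λ) > x - 1]·Pr[Lap(λ) ≤ x - 1] ≥ e^{1/λ}·Pr[Lap(λ) > x]·Pr[Lap(λ) ≤ x - 2]. -/
open Real MeasureTheory

/-!
By symmetry of the density, `Pr[Lap ≤ s] = Pr[Lap > -s]`, so both sides are products of two
tails. On `[0, ∞)` the tail is `exp (-t / l) / 2`, so moving its argument left by one multiplies it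
by exactly `e^{1/l}`, while on the whole line moving left by one can only increase it. Of `x - 1`
and `1 - x` one is nonnegative: it supplies the exact factor `e^{1/l}`, and monotonicity handles
the other pair of tails.
-/

noncomputable def lapDensity (l y : ℝ) : ℝ :=
  (1 / (2 * l)) * Real.exp (-|y| / l)

lemma lapTail_eq_integral_lapDensity (l t : ℝ) :
    lapTail l t = ∫ y in Set.Ioi t, lapDensity l y := rfl

lemma lapDensity_nonneg {l : ℝ} (hl : 0 ≤ l) (y : ℝ) : 0 ≤ lapDensity l y := by
  unfold lapDensity
  positivity

lemma integrable_lapDensity {l : ℝ} (hl : 0 < l) : Integrable (lapDensity l) := by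
  have hIic : IntegrableOn (lapDensity l) (Set.Iic 0) := by
    refine IntegrableOn.congr_fun
      ((integrableOn_exp_mul_Iic (one_div_pos.2 hl) 0).const_mul (1 / (2 * l)))
      (fun y (hy : y ≤ 0) => ?_) measurableSet_Iic
    rw [lapDensity, abs_of_nonpos hy]
    ring_nf
  have hIoi : IntegrableOn (lapDensity l) (Set.Ioi 0) := by
    refine IntegrableOn.congr_fun
      ((integrableOn_exp_mul_Ioi (neg_lt_zero.2 (one_div_pos.2 hl)) 0).const_mul (1 / (2 * l)))
      (fun y (hy : 0 < y) => ?_) measurableSet_Ioi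
    rw [lapDensity, abs_of_pos hy]
    ring_nf
  rw [← integrableOn_univ, ← Set.Iic_union_Ioi (a := (0 : ℝ))]
  exact hIic.union hIoi

lemma lapCDF_eq_lapTail_neg (l t : ℝ) : lapCDF l t = lapTail l (-t) := by
  rw [lapCDF, lapTail, ← integral_comp_neg_Iic]
  simp only [abs_neg]

lemma lapTail_nonneg {l : ℝ} (hl : 0 ≤ l) (t : ℝ) : 0 ≤ lapTail l t :=
  setIntegral_nonneg measurableSet_Ioi fun y _ => lapDensity_nonneg hl y

lemma lapTail_antitone {l : ℝ} (hl : 0 < l) : Antitone (lapTail l) := fun _ _ hab =>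
  setIntegral_mono_set (integrable_lapDensity hl).integrableOn
    (.of_forall fun y => lapDensity_nonneg hl.le y)
    (.of_forall fun _ hy => lt_of_le_of_lt hab hy)

lemma lapTail_of_nonneg {l t : ℝ} (hl : 0 < l) (ht : 0 ≤ t) :
    lapTail l t = Real.exp (-t / l) / 2 := by
  have hdensity : ∀ y ∈ Set.Ioi t,
      lapDensity l y = 1 / (2 * l) * Real.exp (-(1 / l) * y) := fun y (hy : t < y) => by
    rw [lapDensity, abs_of_pos (ht.trans_lt hy)]
    ring_nf
  rw [lapTail_eq_integral_lapDensity, setIntegral_congr_fun measurableSet_Ioi hdensity,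
    integral_const_mul, integral_exp_mul_Ioi (neg_lt_zero.2 (one_div_pos.2 hl))]
  field_simp

lemma lapTail_eq_exp_mul_lapTail_add_one {l t : ℝ} (hl : 0 < l) (ht : 0 ≤ t) :
    lapTail l t = Real.exp (1 / l) * lapTail l (t + 1) := by
  rw [lapTail_of_nonneg hl ht, lapTail_of_nonneg hl (by linarith), mul_div_assoc', ← Real.exp_add]
  congr 2
  field_simp
  ring

lemma exp_mul_lapTail_mul_lapTail_le {l t : ℝ} (hl : 0 < l) (ht : 0 ≤ t) (s : ℝ) :
    Real.exp (1 / l) * (lapTail l (t + 1) * lapTail l s) ≤ lapTail l t * lapTail l (s - 1) := by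
  rw [lapTail_eq_exp_mul_lapTail_add_one hl ht, ← mul_assoc]
  exact mul_le_mul_of_nonneg_left (lapTail_antitone hl (by linarith))
    (mul_nonneg (Real.exp_pos _).le (lapTail_nonneg hl.le _))

theorem stmt11_general (l x : ℝ) (hl : 0 < l) :
    lapTail l (x - 1) * lapCDF l (x - 1) ≥
      Real.exp (1 / l) * (lapTail l x * lapCDF l (x - 2)) := by
  rw [lapCDF_eq_lapTail_neg, lapCDF_eq_lapTail_neg, ge_iff_le]
  rcases le_or_gt 1 x with hx | hx
  · have key := exp_mul_lapTail_mul_lapTail_le hl (t := x - 1) (by linarith) (-(x - 2))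
    rwa [sub_add_cancel, show -(x - 2) - 1 = -(x - 1) by ring] at key
  · have key := exp_mul_lapTail_mul_lapTail_le hl (t := -(x - 1)) (by linarith) x
    rw [show -(x - 1) + 1 = -(x - 2) by ring] at key
    linear_combination key

/-- Pr[Lap>x-1]·Pr[Lap≤x-1] ≥ e^{1/λ}·Pr[Lap>x]·Pr[Lap≤x-2]. -/
theorem stmt11 (l x t : ℝ) (hl : 0 < l) (ht : 0 ≤ t) :
    lapTail l (x - 1) * lapCDF l (x - 1) ≥
      Real.exp (1 / l) * (lapTail l x * lapCDF l (x - 2)) :=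
  stmt11_general l x hl
end

section
/- Fix λ > 0 and an integer k ≥ 1. Let f_λ be the density of Lap(λ) and F_λ its CDF. Then ∫_{-∞}^{1} g(x)·(F_λ(x-1))^{k-1}·f_λ(0) dx = e^{k/λ} · ∫_{-∞}^{1} g(x)·(F_λ(x-2))^{k-1}·f_λ(1) dx, where g is any probability density on (-∞, 1). Hence the vanilla SVT requires noise scale Ω(k/ε) to satisfy ε-differential privacy in the worst case. -/
/-! On `(-∞, 0]` the Laplace CDF is `e^{t/λ}/2`, so shifting its argument by `-1` divides it by
`e^{1/λ}`, exactly as moving the density from `0` to `1` does. Hence the two integrands are pointwise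
in ratio `e^{1/λ} · (e^{1/λ})^{k-1} = e^{k/λ}` on `(-∞, 1)`, whatever `g` is. -/

open Real MeasureTheory

lemma lapCDF_of_nonpos {l t : ℝ} (hl : 0 < l) (ht : t ≤ 0) :
    lapCDF l t = Real.exp (t / l) / 2 := by
  have hdensity : ∀ y ∈ Set.Iic t,
      (1 / (2 * l)) * Real.exp (-|y| / l) = (1 / (2 * l)) * Real.exp (l⁻¹ * y) := by
    intro y hy
    rw [abs_of_nonpos (le_trans hy ht), neg_neg, div_eq_inv_mul y l]
  rw [lapCDF, setIntegral_congr_fun measurableSet_Iic hdensity, integral_const_mul,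
    integral_exp_mul_Iic (inv_pos.2 hl)]
  field_simp

lemma lapCDF_eq_exp_mul_lapCDF_sub {l t s : ℝ} (hl : 0 < l) (ht : t ≤ 0) (hs : 0 ≤ s) :
    lapCDF l t = Real.exp (s / l) * lapCDF l (t - s) := by
  rw [lapCDF_of_nonpos hl ht, lapCDF_of_nonpos hl (by linarith), mul_div_assoc', ← Real.exp_add]
  ring_nf

lemma laplace_density_zero_eq_exp_mul_density_one (l : ℝ) :
    (1 / (2 * l)) * Real.exp (-|(0 : ℝ)| / l) =
      Real.exp (1 / l) * ((1 / (2 * l)) * Real.exp (-|(1 : ℝ)| / l)) := by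
  rw [mul_left_comm, ← Real.exp_add]
  simp [neg_div]

theorem stmt13_general (l : ℝ) (hl : 0 < l) (k : ℕ) (hk : 1 ≤ k)
    (g : ℝ → ℝ) :
    (∫ x in Set.Iio (1 : ℝ),
        g x * (lapCDF l (x - 1)) ^ (k - 1) * ((1 / (2 * l)) * Real.exp (-|(0 : ℝ)| / l))) =
      Real.exp ((k : ℝ) / l) *
        ∫ x in Set.Iio (1 : ℝ),
          g x * (lapCDF l (x - 2)) ^ (k - 1) * ((1 / (2 * l)) * Real.exp (-|(1 : ℝ)| / l)) := by
  obtain ⟨n, rfl⟩ := Nat.exists_eq_add_of_le' hk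
  have hexp : Real.exp (((n + 1 : ℕ) : ℝ) / l) = Real.exp (1 / l) ^ n * Real.exp (1 / l) := by
    rw [← Real.exp_nat_mul, ← Real.exp_add]
    push_cast
    ring_nf
  rw [← integral_const_mul]
  refine setIntegral_congr_fun measurableSet_Iio fun x (hx : x < 1) => ?_
  rw [Nat.add_sub_cancel, laplace_density_zero_eq_exp_mul_density_one,
    lapCDF_eq_exp_mul_lapCDF_sub (s := 1) hl (by linarith) zero_le_one, hexp]
  ring_nf

/-- vanilla SVT counterexample identity: the two output probabilities
are in exact ratio e^{k/λ}. -/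
theorem stmt13 (l : ℝ) (hl : 0 < l) (k : ℕ) (hk : 1 ≤ k)
    (g : ℝ → ℝ) (hg0 : ∀ x, 0 ≤ g x) (hg1 : (∫ x in Set.Iio (1 : ℝ), g x) = 1) :
    (∫ x in Set.Iio (1 : ℝ),
        g x * (lapCDF l (x - 1)) ^ (k - 1) * ((1 / (2 * l)) * Real.exp (-|(0 : ℝ)| / l))) =
      Real.exp ((k : ℝ) / l) *
        ∫ x in Set.Iio (1 : ℝ),
          g x * (lapCDF l (x - 2)) ^ (k - 1) * ((1 / (2 * l)) * Real.exp (-|(1 : ℝ)| / l)) :=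
  stmt13_general l hl k hk g
end

section
/- Let λ > 0 and θ, x be reals with x ≥ θ + 1. Then ln( (1 - (1/2)·e^{(θ-x)/λ}) / (1 - (1/2)·e^{(θ+1-x)/λ}) ) ≤ (1/λ)·e^{(θ+1-x)/λ}. -/
open Real

/-- core analytic inequality for x ≥ θ + 1. -/
theorem stmt15 (l θ x : ℝ) (hl : 0 < l) (hx : x ≥ θ + 1) :
    Real.log ((1 - (1 / 2) * Real.exp ((θ - x) / l)) /
        (1 - (1 / 2) * Real.exp ((θ + 1 - x) / l))) ≤
      (1 / l) * Real.exp ((θ + 1 - x) / l) := by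
  set t : ℝ := (θ + 1 - x) / l with ht
  have ht0 : t ≤ 0 := div_nonpos_of_nonpos_of_nonneg (by linarith) hl.le
  have hu0 : 0 < Real.exp t := Real.exp_pos t
  have hu1 : Real.exp t ≤ 1 := Real.exp_le_one_iff.mpr ht0
  have hrel : (θ - x) / l = t + (-1 / l) := by
    rw [ht]; field_simp; ring
  have hcexp : Real.exp ((θ - x) / l) = Real.exp t * Real.exp (-1 / l) := by
    rw [hrel, Real.exp_add]
  have hc0 : 0 < Real.exp (-1 / l) := Real.exp_pos _
  have hc1 : Real.exp (-1 / l) ≤ 1 :=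
    Real.exp_le_one_iff.mpr (div_nonpos_of_nonpos_of_nonneg (by norm_num) hl.le)
  have hc2 : 1 + (-1 / l) ≤ Real.exp (-1 / l) := by
    have := Real.add_one_le_exp (-1 / l); linarith
  have hB : (0:ℝ) < 1 - 1 / 2 * Real.exp t := by linarith
  have hA : (0:ℝ) < 1 - 1 / 2 * Real.exp ((θ - x) / l) := by
    rw [hcexp]; nlinarith
  have hdiv : (0:ℝ) < (1 - 1 / 2 * Real.exp ((θ - x) / l)) / (1 - 1 / 2 * Real.exp t) :=
    div_pos hA hB
  have hlog := Real.log_le_sub_one_of_pos hdiv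
  refine hlog.trans ?_
  rw [div_sub_one hB.ne', div_le_iff₀ hB, hcexp]
  have hlc : l * (1 - Real.exp (-1 / l)) ≤ 1 := by
    have : l * (1 + (-1 / l)) ≤ l * Real.exp (-1 / l) := by
      exact mul_le_mul_of_nonneg_left hc2 hl.le
    have h2 : l * (1 + (-1 / l)) = l - 1 := by field_simp; ring
    nlinarith
  have h1l : (0:ℝ) < 1 / l := by positivity
  have h3 : 1 - Real.exp (-1 / l) ≤ 1 / l := by
    rw [le_div_iff₀ hl]; nlinarith
  nlinarith [mul_le_mul_of_nonneg_left h3 hu0.le,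
    mul_le_mul_of_nonneg_right hu1 (mul_nonneg hu0.le h1l.le)]
end

section
/- For the Laplace distribution with scale λ > 0: for all reals a, b with |a - b| ≤ 1, Pr[Lap(λ) > a] ≤ e^{1/λ}·Pr[Lap(λ) > b] and Pr[Lap(λ) ≤ a] ≤ e^{1/λ}·Pr[Lap(λ) ≤ b]. -/
open Real MeasureTheory

lemma integrable_exp_neg_abs_div {l : ℝ} (hl : 0 < l) :
    Integrable fun y : ℝ => exp (-|y| / l) := by
  have hneg : IntegrableOn (fun y : ℝ => exp (-|y| / l)) (Set.Iic 0) :=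
    (integrableOn_exp_mul_Iic (inv_pos.mpr hl) 0).congr_fun
      (fun y (hy : y ≤ 0) => by dsimp only; rw [abs_of_nonpos hy, neg_neg, inv_mul_eq_div])
      measurableSet_Iic
  have hpos : IntegrableOn (fun y : ℝ => exp (-|y| / l)) (Set.Ioi 0) :=
    (integrableOn_exp_mul_Ioi (neg_lt_zero.mpr (inv_pos.mpr hl)) 0).congr_fun
      (fun y (hy : 0 < y) => by dsimp only; rw [abs_of_pos hy, neg_mul, inv_mul_eq_div, neg_div])
      measurableSet_Ioi
  simpa only [Set.Iic_union_Ioi, integrableOn_univ] using hneg.union hpos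

lemma exp_neg_abs_add_div_le {l : ℝ} (hl : 0 ≤ l) (y c : ℝ) :
    exp (-|y + c| / l) ≤ exp (|c| / l) * exp (-|y| / l) := by
  rw [← exp_add, exp_le_exp, ← add_div]
  gcongr
  have h := abs_add_le (y + c) (-c)
  rw [add_neg_cancel_right, abs_neg] at h
  linarith

lemma setIntegral_le_mul_setIntegral_preimage_add {f : ℝ → ℝ} (hf : Integrable f) {K c : ℝ}
    (hfK : ∀ y, f (y + c) ≤ K * f y) (s : Set ℝ) :
    ∫ y in s, f y ≤ K * ∫ y in (· + c) ⁻¹' s, f y := by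
  rw [← (measurePreserving_add_right volume c).setIntegral_preimage_emb
    (measurableEmbedding_addRight c), ← integral_const_mul]
  exact setIntegral_mono (hf.comp_add_right c).integrableOn (hf.const_mul K).integrableOn hfK

lemma laplace_density_add_le {l : ℝ} (hl : 0 ≤ l) (c y : ℝ) :
    1 / (2 * l) * exp (-|y + c| / l) ≤ exp (|c| / l) * (1 / (2 * l) * exp (-|y| / l)) := by
  rw [mul_left_comm]
  gcongr
  exact exp_neg_abs_add_div_le hl y c

lemma lapTail_le_exp_mul {l : ℝ} (hl : 0 < l) (a b : ℝ) :
    lapTail l a ≤ exp (|a - b| / l) * lapTail l b := by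
  have := setIntegral_le_mul_setIntegral_preimage_add
    ((integrable_exp_neg_abs_div hl).const_mul (1 / (2 * l))) (laplace_density_add_le hl.le (a - b))
    (Set.Ioi a)
  rwa [Set.preimage_add_const_Ioi, sub_sub_cancel] at this

lemma lapCDF_le_exp_mul {l : ℝ} (hl : 0 < l) (a b : ℝ) :
    lapCDF l a ≤ exp (|a - b| / l) * lapCDF l b := by
  have := setIntegral_le_mul_setIntegral_preimage_add
    ((integrable_exp_neg_abs_div hl).const_mul (1 / (2 * l))) (laplace_density_add_le hl.le (a - b))
    (Set.Iic a)
  rwa [Set.preimage_add_const_Iic, sub_sub_cancel] at this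

lemma lapCDF_nonneg {l : ℝ} (hl : 0 ≤ l) (t : ℝ) : 0 ≤ lapCDF l t :=
  setIntegral_nonneg measurableSet_Iic fun _ _ => by positivity

/-- unit-shift multiplicative Lipschitz property of Laplace tails. -/
theorem stmt18 (l a b : ℝ) (hl : 0 < l) (hab : |a - b| ≤ 1) :
    lapTail l a ≤ Real.exp (1 / l) * lapTail l b ∧
      lapCDF l a ≤ Real.exp (1 / l) * lapCDF l b := by
  have hexp : exp (|a - b| / l) ≤ exp (1 / l) := by gcongr
  exact ⟨(lapTail_le_exp_mul hl a b).trans (by gcongr; exact lapTail_nonneg hl.le b),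
    (lapCDF_le_exp_mul hl a b).trans (by gcongr; exact lapCDF_nonneg hl.le b)⟩
end
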